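/- For unit vectors z'₁,…,z'_n, z''₁,…,z''_n in ℝ^d and ρ > 0, the TiCo loss with C = (1/n)∑ⱼ z'ⱼ z'ⱼᵀ, namely ℓ = −(1/n)∑ᵢ z'ᵢᵀ z''ᵢ + (ρ/n)∑ᵢ z'ᵢᵀ C z'ᵢ, is bounded below by −1 + ρ/d. -/

import Mathlib

open Matrix

/-!
The first term of the loss is at least `-1` by Cauchy–Schwarz. For the second, let `Z` be the
`n × d` matrix with rows `z'ᵢ` and `S = Zᵀ Z = n C`. Then `∑ᵢ z'ᵢᵀ S z'ᵢ = tr (S²) = ‖S‖_F²`,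
and already the diagonal of `S` gives `‖S‖_F² ≥ (tr S)² / d` by Cauchy–Schwarz, where
`tr S = ∑ᵢ ‖z'ᵢ‖² = n`.
-/

namespace Matrix

variable {ι m R : Type*} [Fintype ι]

theorem sum_vecMulVec_self [NonUnitalNonAssocSemiring R] (A : Matrix ι m R) :
    ∑ i, vecMulVec (A i) (A i) = Aᵀ * A := by
  ext k l
  simp [Matrix.sum_apply, vecMulVec_apply, mul_apply]

variable [Fintype m]

theorem sum_dotProduct_mulVec_self [NonUnitalCommSemiring R] (A : Matrix ι m R)
    (M : Matrix m m R) :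
    ∑ i, A i ⬝ᵥ (M *ᵥ A i) = trace (Aᵀ * A * M) := by
  rw [Matrix.mul_assoc, ← trace_mul_cycle' A M Aᵀ]
  simp [trace, mul_apply, dotProduct, mulVec, Finset.mul_sum]

theorem trace_mul_transpose_self [Semiring R] (A : Matrix ι m R) :
    trace (A * Aᵀ) = ∑ i, ∑ k, A i k ^ 2 := by
  simp [trace, mul_apply, sq]

theorem trace_transpose_mul_self [CommSemiring R] (A : Matrix ι m R) :
    trace (Aᵀ * A) = ∑ i, ∑ k, A i k ^ 2 := by
  rw [trace_mul_comm, trace_mul_transpose_self]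

theorem sq_trace_le_card_mul_trace_mul_transpose_self [Ring R] [LinearOrder R]
    [IsStrictOrderedRing R] (S : Matrix m m R) :
    trace S ^ 2 ≤ Fintype.card m * trace (S * Sᵀ) := by
  have hdiag : ∑ k, S k k ^ 2 ≤ ∑ k, ∑ l, S k l ^ 2 :=
    Finset.sum_le_sum fun k _ =>
      Finset.single_le_sum (f := fun l => S k l ^ 2) (fun l _ => sq_nonneg _) (Finset.mem_univ k)
  calc trace S ^ 2 ≤ Fintype.card m * ∑ k, S k k ^ 2 := sq_sum_le_card_mul_sum_sq
    _ ≤ Fintype.card m * trace (S * Sᵀ) := by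
      rw [trace_mul_transpose_self]
      gcongr

end Matrix

theorem tico_loss_lower_bound_general (d n : ℕ) (hn : 0 < n)
    (ρ : ℝ) (hρ : 0 < ρ)
    (z' z'' : Fin n → Fin d → ℝ)
    (hz' : ∀ i, ∑ k, (z' i k)^2 = 1) (hz'' : ∀ i, ∑ k, (z'' i k)^2 = 1) :
    -1 + ρ/d ≤ -((1/(n:ℝ)) * ∑ i, z' i ⬝ᵥ z'' i)
      + (ρ/(n:ℝ)) * ∑ i, z' i ⬝ᵥ
          (((1/(n:ℝ)) • ∑ j, vecMulVec (z' j) (z' j)) *ᵥ z' i) := by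
  have hn' : (0 : ℝ) < n := by exact_mod_cast hn
  have halign : 1 / n * ∑ i, z' i ⬝ᵥ z'' i ≤ 1 := by
    rw [one_div_mul_eq_div, div_le_one hn']
    calc ∑ i, z' i ⬝ᵥ z'' i ≤ ∑ _i : Fin n, (1 : ℝ) := Finset.sum_le_sum fun i _ =>
          (Real.sum_mul_le_sqrt_mul_sqrt _ _ _).trans_eq (by simp [hz' i, hz'' i])
      _ = n := by simp
  set Z : Matrix (Fin n) (Fin d) ℝ := z'
  rw [sum_vecMulVec_self Z, sum_dotProduct_mulVec_self Z, Matrix.mul_smul, trace_smul, smul_eq_mul]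
  set S := Zᵀ * Z with hS
  have hS_symm : Sᵀ = S := by rw [hS, transpose_mul, transpose_transpose]
  have htrace : trace S = n := by simp [hS, trace_transpose_mul_self, hz']
  have hfrob := sq_trace_le_card_mul_trace_mul_transpose_self S
  rw [htrace, Fintype.card_fin, hS_symm] at hfrob
  have hvariance : ρ / d ≤ ρ / n * (1 / n * trace (S * S)) := by
    have hfrob_nonneg : 0 ≤ trace (S * S) := by
      nth_rewrite 2 [← hS_symm]
      rw [trace_mul_transpose_self]
      positivity
    refine div_le_of_le_mul₀ (Nat.cast_nonneg d) (by positivity) ?_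
    rw [show ρ / n * (1 / n * trace (S * S)) * d = ρ * (d * trace (S * S)) / n ^ 2 by ring,
      le_div_iff₀ (by positivity)]
    exact mul_le_mul_of_nonneg_left hfrob hρ.le
  linarith

theorem tico_loss_lower_bound (d n : ℕ) (hd : 0 < d) (hn : 0 < n)
    (ρ : ℝ) (hρ : 0 < ρ)
    (z' z'' : Fin n → Fin d → ℝ)
    (hz' : ∀ i, ∑ k, (z' i k)^2 = 1) (hz'' : ∀ i, ∑ k, (z'' i k)^2 = 1) :
    -1 + ρ/d ≤ -((1/(n:ℝ)) * ∑ i, z' i ⬝ᵥ z'' i)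
      + (ρ/(n:ℝ)) * ∑ i, z' i ⬝ᵥ
          (((1/(n:ℝ)) • ∑ j, vecMulVec (z' j) (z' j)) *ᵥ z' i) :=
  tico_loss_lower_bound_general d n hn ρ hρ z' z'' hz' hz''
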